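/- Let n₁,…,n_m be unit vectors in ℝ², b₁,…,b_m > 0, r > 0 and p ∈ ℝ², and let K = (⋂ᵢ {x ∈ ℝ² : ⟪nᵢ, x − p⟫ ≤ bᵢ}) ∩ closedBall(p, r). Then for every q ∈ ℝ² with q ≠ p, if q' is the unique point of the frontier of K on the ray {p + t(q − p) : t > 0}, then ‖q − p‖ / ‖q' − p‖ = max{ maxᵢ ⟪nᵢ, q − p⟫ / bᵢ, ‖q − p‖ / r }. -/

import Mathlib

/-!
Write `v = q - p` and `M = max (maxᵢ ⟪nᵢ, v⟫ / bᵢ) (‖v‖ / r)`, so `M > 0`. For `t > 0`,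
the point `p + t • v` satisfies each constraint of `K` exactly when the corresponding ratio is
at most `t⁻¹`, so it lies in `K` iff `M ≤ t⁻¹`. Hence the ray meets `K` in the segment of
parameters `(0, M⁻¹]`, its endpoint `p + M⁻¹ • v` lies on the frontier of `K`, and by
uniqueness it is `q'`; then `‖q - p‖ / ‖q' - p‖ = M`.
-/

open RealInnerProductSpace Filter Topology

theorem mem_frontier_of_forall_lt_notMem {X : Type*} [TopologicalSpace X] {K : Set X}
    {γ : ℝ → X} {s : ℝ} (hγ : ContinuousAt γ s) (hs : γ s ∈ K)
    (hout : ∀ t, s < t → γ t ∉ K) : γ s ∈ frontier K := by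
  rw [frontier_eq_closure_inter_closure]
  exact ⟨subset_closure hs, mem_closure_of_tendsto (b := 𝓝[>] s)
    (hγ.tendsto.mono_left nhdsWithin_le_nhds) (eventually_nhdsWithin_of_forall hout)⟩

theorem mul_le_iff_div_le_inv {a b t : ℝ} (hb : 0 < b) (ht : 0 < t) :
    t * a ≤ b ↔ a / b ≤ t⁻¹ := by
  rw [div_le_iff₀ hb, ← div_eq_inv_mul, le_div_iff₀' ht]

theorem add_smul_mem_iInter_halfspace_inter_closedBall_iff
    {E : Type*} [NormedAddCommGroup E] [InnerProductSpace ℝ E]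
    {ι : Type*} [Fintype ι] [Nonempty ι] (n : ι → E) {b : ι → ℝ} (hb : ∀ i, 0 < b i)
    {r : ℝ} (hr : 0 < r) (p v : E) {t : ℝ} (ht : 0 < t) :
    p + t • v ∈ (⋂ i, {x : E | ⟪n i, x - p⟫ ≤ b i}) ∩ Metric.closedBall p r ↔
      max (Finset.univ.sup' Finset.univ_nonempty (fun i => ⟪n i, v⟫ / b i)) (‖v‖ / r) ≤ t⁻¹ := by
  simp only [Set.mem_inter_iff, Set.mem_iInter, Set.mem_ofPred_eq, Metric.mem_closedBall,
    dist_eq_norm, add_sub_cancel_left, inner_smul_right, norm_smul, Real.norm_of_nonneg ht.le,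
    max_le_iff, Finset.sup'_le_iff, Finset.mem_univ, true_implies,
    mul_le_iff_div_le_inv (hb _) ht, mul_le_iff_div_le_inv hr ht]

theorem convex_set_distance_algebraic_general
    {ι : Type*} [Fintype ι] [Nonempty ι]
    (n : ι → EuclideanSpace ℝ (Fin 2)) (b : ι → ℝ)
    (hb : ∀ i, 0 < b i)
    (r : ℝ) (hr : 0 < r)
    (p : EuclideanSpace ℝ (Fin 2))
    (K : Set (EuclideanSpace ℝ (Fin 2)))
    (hK : K = (⋂ i, {x : EuclideanSpace ℝ (Fin 2) | ⟪n i, x - p⟫ ≤ b i}) ∩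
      Metric.closedBall p r)
    (q : EuclideanSpace ℝ (Fin 2)) (hq : q ≠ p)
    (q' : EuclideanSpace ℝ (Fin 2))
    (hq'uniq : ∀ y : EuclideanSpace ℝ (Fin 2),
      y ∈ frontier K → (∃ t : ℝ, 0 < t ∧ y = p + t • (q - p)) → y = q') :
    ‖q - p‖ / ‖q' - p‖ =
      max (Finset.univ.sup' Finset.univ_nonempty (fun i => ⟪n i, q - p⟫ / b i))
        (‖q - p‖ / r) := by
  set M := max (Finset.univ.sup' Finset.univ_nonempty (fun i => ⟪n i, q - p⟫ / b i))
    (‖q - p‖ / r)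
  have hv : 0 < ‖q - p‖ := norm_pos_iff.mpr (sub_ne_zero.mpr hq)
  have hM : 0 < M := (div_pos hv hr).trans_le (le_max_right _ _)
  have hray : ∀ t, 0 < t → (p + t • (q - p) ∈ K ↔ M ≤ t⁻¹) := fun t ht => by
    rw [hK]
    exact add_smul_mem_iInter_halfspace_inter_closedBall_iff n hb hr p (q - p) ht
  have hfrontier : p + M⁻¹ • (q - p) ∈ frontier K := by
    refine mem_frontier_of_forall_lt_notMem (γ := fun t => p + t • (q - p)) (by fun_prop)
      ((hray _ (inv_pos.mpr hM)).mpr (inv_inv M).ge) fun t ht => ?_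
    have ht' : 0 < t := (inv_pos.mpr hM).trans ht
    rw [hray t ht', not_le]
    exact inv_lt_of_inv_lt₀ hM ht
  rw [← hq'uniq _ hfrontier ⟨M⁻¹, inv_pos.mpr hM, rfl⟩, add_sub_cancel_left, norm_smul,
    Real.norm_of_nonneg (inv_pos.mpr hM).le]
  field_simp

/-- **Algebraic form of the convex set distance (half-planes intersected with a disk).**
For `K = (⋂ᵢ {x | ⟪nᵢ, x - p⟫ ≤ bᵢ}) ∩ closedBall p r` with unit normals `nᵢ`, offsets
`bᵢ > 0` and radius `r > 0`, and any `q ≠ p`, if `q'` is the unique frontier point of `K`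
on the ray from `p` through `q`, then
`‖q - p‖ / ‖q' - p‖ = max (maxᵢ ⟪nᵢ, q - p⟫ / bᵢ) (‖q - p‖ / r)`. -/
theorem convex_set_distance_algebraic
    {ι : Type*} [Fintype ι] [Nonempty ι]
    (n : ι → EuclideanSpace ℝ (Fin 2)) (b : ι → ℝ)
    (hn : ∀ i, ‖n i‖ = 1) (hb : ∀ i, 0 < b i)
    (r : ℝ) (hr : 0 < r)
    (p : EuclideanSpace ℝ (Fin 2))
    (K : Set (EuclideanSpace ℝ (Fin 2)))
    (hK : K = (⋂ i, {x : EuclideanSpace ℝ (Fin 2) | ⟪n i, x - p⟫ ≤ b i}) ∩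
      Metric.closedBall p r)
    (q : EuclideanSpace ℝ (Fin 2)) (hq : q ≠ p)
    (q' : EuclideanSpace ℝ (Fin 2))
    (hq'mem : q' ∈ frontier K)
    (hq'ray : ∃ t : ℝ, 0 < t ∧ q' = p + t • (q - p))
    (hq'uniq : ∀ y : EuclideanSpace ℝ (Fin 2),
      y ∈ frontier K → (∃ t : ℝ, 0 < t ∧ y = p + t • (q - p)) → y = q') :
    ‖q - p‖ / ‖q' - p‖ =
      max (Finset.univ.sup' Finset.univ_nonempty (fun i => ⟪n i, q - p⟫ / b i))
        (‖q - p‖ / r) :=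
  convex_set_distance_algebraic_general n b hb r hr p K hK q hq q' hq'uniq
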